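/- Let n ≥ 1 and let A be a self-adjoint n×n complex matrix with Tr A = 0 such that I + A is positive semidefinite. If Tr(A²) = n² − n, then I + A = nP for some orthogonal projection P of rank one (P = P* = P², Tr P = 1). -/

import Mathlib

/-! Let `B = 1 + A`, a positive semidefinite matrix with eigenvalues `μᵢ ≥ 0`, `∑ μᵢ = Tr B = n` and
`∑ μᵢ² = Tr B² = n²`. For nonnegative reals, `∑ μᵢ² = (∑ μᵢ)²` forces `μᵢ² = (∑ μⱼ) μᵢ` for every `i`,
since the gaps `(∑ μⱼ) μᵢ - μᵢ²` are nonnegative and sum to zero. Hence `B² = n B`, and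
`P = n⁻¹ B` is a self-adjoint idempotent of trace one. -/

open Matrix ComplexOrder

theorem Finset.sq_eq_sum_mul_of_sum_sq_eq_sq_sum {ι : Type*} {s : Finset ι} {x : ι → ℝ}
    (hx : ∀ i ∈ s, 0 ≤ x i) (h : ∑ i ∈ s, x i ^ 2 = (∑ i ∈ s, x i) ^ 2) :
    ∀ i ∈ s, x i ^ 2 = (∑ j ∈ s, x j) * x i := by
  have hgap_nonneg : ∀ i ∈ s, 0 ≤ (∑ j ∈ s, x j) * x i - x i ^ 2 := fun i hi => by
    have hle : x i ≤ ∑ j ∈ s, x j := Finset.single_le_sum hx hi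
    nlinarith [hx i hi]
  have hgap_sum : ∑ i ∈ s, ((∑ j ∈ s, x j) * x i - x i ^ 2) = 0 := by
    rw [Finset.sum_sub_distrib, ← Finset.mul_sum, h, sq, sub_self]
  intro i hi
  linarith [(Finset.sum_eq_zero_iff_of_nonneg hgap_nonneg).mp hgap_sum i hi]

namespace Matrix

variable {𝕜 n : Type*} [RCLike 𝕜] [Fintype n] [DecidableEq n]

theorem trace_conjStarAlgAut (U : unitary (Matrix n n 𝕜)) (M : Matrix n n 𝕜) :
    (Unitary.conjStarAlgAut 𝕜 _ U M).trace = M.trace := by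
  rw [Unitary.conjStarAlgAut_apply, trace_mul_cycle, Unitary.coe_star_mul_self, one_mul]

theorem PosSemidef.mul_self_eq_trace_smul_of_trace_mul_self_eq {B : Matrix n n 𝕜}
    (hB : B.PosSemidef) (h : (B * B).trace = B.trace ^ 2) : B * B = B.trace • B := by
  set μ := hB.isHermitian.eigenvalues
  set conj := Unitary.conjStarAlgAut 𝕜 _ hB.isHermitian.eigenvectorUnitary
  have hspec : B = conj (diagonal (RCLike.ofReal ∘ μ)) := hB.isHermitian.spectral_theorem
  have htrace : B.trace = ((∑ i, μ i : ℝ) : 𝕜) := by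
    rw [hB.isHermitian.trace_eq_sum_eigenvalues, RCLike.ofReal_sum]
  have htrace_sq : (B * B).trace = ((∑ i, μ i ^ 2 : ℝ) : 𝕜) := by
    rw [hspec, ← map_mul, trace_conjStarAlgAut, diagonal_mul_diagonal, trace_diagonal]
    push_cast
    simp [sq]
  have hμ : ∀ i, μ i ^ 2 = (∑ j, μ j) * μ i := fun i =>
    Finset.sq_eq_sum_mul_of_sum_sq_eq_sq_sum (fun i _ => hB.eigenvalues_nonneg i)
      (by exact_mod_cast htrace_sq ▸ htrace ▸ h) i (Finset.mem_univ i)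
  rw [htrace, hspec, ← map_mul, ← map_smul, diagonal_mul_diagonal, ← diagonal_smul]
  congr 2
  funext i
  simp only [Function.comp_apply, Pi.smul_apply, smul_eq_mul]
  exact_mod_cast (sq (μ i)).symm.trans (hμ i)

end Matrix

theorem one_add_eq_smul_projection_of_trace_sq_eq
    (n : ℕ) (hn : 1 ≤ n) (A : Matrix (Fin n) (Fin n) ℂ)
    (htr : A.trace = 0)
    (hpos : (1 + A).PosSemidef)
    (heq : (A * A).trace = ((n ^ 2 - n : ℝ) : ℂ)) :
    ∃ P : Matrix (Fin n) (Fin n) ℂ,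
      Pᴴ = P ∧ P * P = P ∧ P.trace = 1 ∧ 1 + A = (n : ℂ) • P := by
  have hn0 : (n : ℂ) ≠ 0 := by exact_mod_cast (by omega : n ≠ 0)
  have htrace : (1 + A).trace = n := by simp [htr]
  have hsq : (1 + A) * (1 + A) = (n : ℂ) • (1 + A) := by
    rw [← htrace]
    refine hpos.mul_self_eq_trace_smul_of_trace_mul_self_eq ?_
    rw [htrace, show (1 + A) * (1 + A) = 1 + 2 • A + A * A by noncomm_ring]
    simp only [trace_add, trace_smul, trace_one, htr, heq, Fintype.card_fin]
    push_cast
    ring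
  refine ⟨(n : ℂ)⁻¹ • (1 + A), ?_, ?_, ?_, ?_⟩
  · rw [conjTranspose_smul, hpos.isHermitian.eq, star_inv₀, Complex.star_def, Complex.conj_natCast]
  · rw [smul_mul_smul_comm, hsq, smul_smul, mul_assoc, inv_mul_cancel₀ hn0, mul_one]
  · rw [trace_smul, htrace, smul_eq_mul, inv_mul_cancel₀ hn0]
  · rw [smul_smul, mul_inv_cancel₀ hn0, one_smul]
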